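/- arXiv:1602.05113 — 3 statements merged into one kernel-verified Lean document; each statement's English description precedes it below -/
import Mathlib

section
/- Let V be a nonempty finite type, f : (V → ℝ) → ℝ a multi-affine function, and r the region determined by bounds a, b : V → ℝ with a x ≤ b x for all x ∈ V. Then there exist vertices v_min and v_max of r such that f v_min ≤ f u ≤ f v_max for every u ∈ r; i.e. a multi-affine function attains its maximum and minimum over a box at a vertex of the box. -/
/-- A multi-affine function on valuations. -/
def MultiAffine {V : Type*} [DecidableEq V] (f : (V → ℝ) → ℝ) : Prop :=
  ∀ (x : V) (u : V → ℝ), ∃ c d : ℝ, ∀ t : ℝ, f (Function.update u x t) = c * t + d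

/-- Membership of a valuation in the region with bounds `a`, `b`. -/
def InRegion {V : Type*} (a b u : V → ℝ) : Prop := ∀ x, a x ≤ u x ∧ u x ≤ b x

/-- A vertex of the region with bounds `a`, `b`. -/
def IsVertex {V : Type*} (a b v : V → ℝ) : Prop := ∀ x, v x = a x ∨ v x = b x

/-!
Along each coordinate a multi-affine function is affine, so moving one coordinate of a point of
the box to a suitable end of its interval does not increase the value. Doing this for every
coordinate in turn reaches a vertex, so every value on the box is bounded below by a value at a
vertex; as there are finitely many vertices, one of them attains the minimum. Applying this to
`-f` gives the maximum.
-/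

open Function

section Vertices

variable {V : Type*} (a b : V → ℝ)

theorem isVertex_left : IsVertex a b a := fun _ => Or.inl rfl

theorem finite_setOf_isVertex [Finite V] : {v | IsVertex a b v}.Finite :=
  (Set.Finite.pi fun x => Set.toFinite {a x, b x}).subset fun _ hv x _ => hv x

end Vertices

namespace MultiAffine

variable {V : Type*} [DecidableEq V] {f : (V → ℝ) → ℝ}

theorem neg (hf : MultiAffine f) : MultiAffine fun u => -f u := by
  intro x u
  obtain ⟨c, d, h⟩ := hf x u
  exact ⟨-c, -d, fun t => by simp only [h]; ring⟩

theorem exists_update_endpoint_le (hf : MultiAffine f) (u : V → ℝ) (x : V) {p q : ℝ}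
    (hp : p ≤ u x) (hq : u x ≤ q) : ∃ t, (t = p ∨ t = q) ∧ f (update u x t) ≤ f u := by
  obtain ⟨c, d, h⟩ := hf x u
  have hu : f u = c * u x + d := by simpa using h (u x)
  rcases le_total 0 c with hc | hc
  · exact ⟨p, Or.inl rfl, by rw [h, hu]; nlinarith⟩
  · exact ⟨q, Or.inr rfl, by rw [h, hu]; nlinarith⟩

theorem exists_isVertex_le [Fintype V] (hf : MultiAffine f) {a b u : V → ℝ}
    (hu : InRegion a b u) : ∃ v, IsVertex a b v ∧ f v ≤ f u := by
  suffices h : ∀ S : Finset V, ∀ u, InRegion a b u → (∀ x ∉ S, u x = a x ∨ u x = b x) →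
      ∃ v, IsVertex a b v ∧ f v ≤ f u from
    h Finset.univ u hu fun x hx => absurd (Finset.mem_univ x) hx
  intro S
  induction S using Finset.induction_on with
  | empty => exact fun u _ hvert => ⟨u, fun x => hvert x (Finset.notMem_empty x), le_rfl⟩
  | insert x S _ ih =>
    intro u hu hvert
    obtain ⟨t, ht, hle⟩ := hf.exists_update_endpoint_le u x (hu x).1 (hu x).2
    have hat : a x ≤ t ∧ t ≤ b x := by
      rcases ht with rfl | rfl <;> constructor <;> linarith [hu x]
    have hu' : InRegion a b (update u x t) := by
      intro y
      rcases eq_or_ne y x with rfl | hyx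
      · simpa using hat
      · simpa [update_of_ne hyx] using hu y
    obtain ⟨v, hv, hvle⟩ := ih (update u x t) hu' fun y hy => by
      rcases eq_or_ne y x with rfl | hyx
      · simpa using ht
      · simpa [update_of_ne hyx] using hvert y (by simp [hyx, hy])
    exact ⟨v, hv, hvle.trans hle⟩

theorem exists_isVertex_ge [Fintype V] (hf : MultiAffine f) {a b u : V → ℝ}
    (hu : InRegion a b u) : ∃ v, IsVertex a b v ∧ f u ≤ f v := by
  obtain ⟨v, hv, hle⟩ := hf.neg.exists_isVertex_le hu
  exact ⟨v, hv, neg_le_neg_iff.mp hle⟩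

end MultiAffine

theorem multiAffine_extrema_at_vertices_general
    {V : Type*} [Fintype V] [DecidableEq V]
    (f : (V → ℝ) → ℝ) (hf : MultiAffine f)
    (a b : V → ℝ) :
    ∃ vmin vmax : V → ℝ, IsVertex a b vmin ∧ IsVertex a b vmax ∧
      ∀ u, InRegion a b u → f vmin ≤ f u ∧ f u ≤ f vmax := by
  obtain ⟨vmin, hvmin, hmin⟩ :=
    Set.exists_min_image _ f (finite_setOf_isVertex a b) ⟨a, isVertex_left a b⟩
  obtain ⟨vmax, hvmax, hmax⟩ :=
    Set.exists_max_image _ f (finite_setOf_isVertex a b) ⟨a, isVertex_left a b⟩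
  refine ⟨vmin, vmax, hvmin, hvmax, fun u hu => ⟨?_, ?_⟩⟩
  · obtain ⟨v, hv, hvu⟩ := hf.exists_isVertex_le hu
    exact (hmin v hv).trans hvu
  · obtain ⟨v, hv, huv⟩ := hf.exists_isVertex_ge hu
    exact huv.trans (hmax v hv)

/-- A multi-affine function attains its maximum and its minimum over a
box at vertices of the box. -/
theorem multiAffine_extrema_at_vertices
    {V : Type*} [Fintype V] [Nonempty V] [DecidableEq V]
    (f : (V → ℝ) → ℝ) (hf : MultiAffine f)
    (a b : V → ℝ) (hab : ∀ x, a x ≤ b x) :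
    ∃ vmin vmax : V → ℝ, IsVertex a b vmin ∧ IsVertex a b vmax ∧
      ∀ u, InRegion a b u → f vmin ≤ f u ∧ f u ≤ f vmax :=
  multiAffine_extrema_at_vertices_general f hf a b
end

section
/- Let P be a parametric Markov chain over states S, r a region (with bounds a, b) that is well-defined for P, T ⊆ S a target set, s₀ ∈ S and λ ∈ ℝ. Form the substitution MDP with rows Act(s) = { (s' ↦ P v s s') | v a vertex of r } for s ∉ T, and let vmax and vmin be its maximal and minimal reachability value vectors for target T, assumed to exist. Then: (i) if vmax s₀ ≤ λ, then for every u ∈ r the reachability-probability vector p_u of (P u, T) satisfies p_u s₀ ≤ λ; and (ii) if vmin s₀ > λ, then for every u ∈ r, p_u s₀ > λ. -/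
open Finset

/-- A stochastic matrix over a finite state space. -/
def IsStochastic {S : Type*} [Fintype S] (P : S → S → ℝ) : Prop :=
  (∀ s s', 0 ≤ P s s') ∧ ∀ s, ∑ s', P s s' = 1

/-- A solution of the reachability equation system for target set `T`. -/
def ReachSol {S : Type*} [Fintype S] (P : S → S → ℝ) (T : Set S) (q : S → ℝ) : Prop :=
  (∀ s, 0 ≤ q s) ∧ (∀ s ∈ T, q s = 1) ∧ ∀ s ∉ T, q s = ∑ s', P s s' * q s'

/-- `p` is the reachability-probability vector: the pointwise-least solution. -/
def IsReachVec {S : Type*} [Fintype S] (P : S → S → ℝ) (T : Set S) (p : S → ℝ) : Prop :=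
  ReachSol P T p ∧ ∀ q, ReachSol P T q → ∀ s, p s ≤ q s

/-- An affine real function. -/
def IsAffine (f : ℝ → ℝ) : Prop := ∃ c d : ℝ, ∀ x, f x = c * x + d

/-- The region with bounds `a`, `b` is well-defined for the pMC `P`. -/
def PMCWellDef {V S : Type*} [Fintype S] (P : (V → ℝ) → S → S → ℝ) (a b : V → ℝ) : Prop :=
  (∀ u, InRegion a b u → IsStochastic (P u)) ∧
  ∀ s s', (∀ u, InRegion a b u → P u s s' = 0) ∨ ∀ u, InRegion a b u → 0 < P u s s'

/-- The rows of the substitution MDP at state `s`: one row for every vertex of the region. -/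
def VertexRows {V S : Type*} (P : (V → ℝ) → S → S → ℝ) (a b : V → ℝ) (s : S) :
    Set (S → ℝ) :=
  {row | ∃ v, IsVertex a b v ∧ row = fun s' => P v s s'}

/-- A solution of the maximal-reachability equation system of an MDP given by `Rows`. -/
def MaxSol {S : Type*} [Fintype S] (Rows : S → Set (S → ℝ)) (T : Set S) (v : S → ℝ) :
    Prop :=
  (∀ s, 0 ≤ v s) ∧ (∀ s ∈ T, v s = 1) ∧
    ∀ s ∉ T, IsGreatest ((fun row => ∑ s', row s' * v s') '' Rows s) (v s)

/-- A solution of the minimal-reachability equation system of an MDP given by `Rows`. -/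
def MinSol {S : Type*} [Fintype S] (Rows : S → Set (S → ℝ)) (T : Set S) (v : S → ℝ) :
    Prop :=
  (∀ s, 0 ≤ v s) ∧ (∀ s ∈ T, v s = 1) ∧
    ∀ s ∉ T, IsLeast ((fun row => ∑ s', row s' * v s') '' Rows s) (v s)

section Aux

variable {V : Type*} [DecidableEq V]

lemma multiAffine_neg' {f : (V → ℝ) → ℝ} (hf : MultiAffine f) :
    MultiAffine (fun u => -(f u)) := by
  intro x u
  obtain ⟨c, d, h⟩ := hf x u
  exact ⟨-c, -d, fun t => by show -(f (Function.update u x t)) = -c * t + -d; rw [h t]; ring⟩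

lemma multiAffine_sum' {ι : Type*} [Fintype ι] (f : ι → (V → ℝ) → ℝ)
    (hf : ∀ i, MultiAffine (f i)) :
    MultiAffine (fun u => ∑ i, f i u) := by
  intro x u
  choose c d h using fun i => hf i x u
  refine ⟨∑ i, c i, ∑ i, d i, fun t => ?_⟩
  show ∑ i, f i (Function.update u x t) = (∑ i, c i) * t + ∑ i, d i
  simp only [h, Finset.sum_add_distrib, ← Finset.sum_mul]

lemma exists_vertex_ge' [Fintype V] {a b : V → ℝ} (hab : ∀ x, a x ≤ b x)
    {f : (V → ℝ) → ℝ} (hf : MultiAffine f) {u : V → ℝ} (hu : InRegion a b u) :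
    ∃ v, IsVertex a b v ∧ f u ≤ f v := by
  classical
  suffices h : ∀ (D : Finset V) (u : V → ℝ), InRegion a b u →
      ∃ v, InRegion a b v ∧ (∀ x ∈ D, v x = a x ∨ v x = b x) ∧
        (∀ x ∉ D, v x = u x) ∧ f u ≤ f v by
    obtain ⟨v, _, hv, _, hle⟩ := h Finset.univ u hu
    exact ⟨v, fun x => hv x (Finset.mem_univ x), hle⟩
  intro D
  induction D using Finset.induction_on with
  | empty => exact fun u hu => ⟨u, hu, by simp, fun _ _ => rfl, le_refl _⟩
  | @insert x₀ D hx₀ ih =>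
    intro u hu
    obtain ⟨c, d, hcd⟩ := hf x₀ u
    set t : ℝ := if 0 ≤ c then b x₀ else a x₀ with ht
    have htmem : a x₀ ≤ t ∧ t ≤ b x₀ := by
      by_cases h : 0 ≤ c <;> simp [ht, h, hab x₀]
    have hle : f u ≤ f (Function.update u x₀ t) := by
      have h1 : f u = c * u x₀ + d := by
        have := hcd (u x₀); rwa [Function.update_eq_self] at this
      rw [h1, hcd t]
      by_cases h : 0 ≤ c
      · simp only [ht, if_pos h]
        have := (hu x₀).2
        nlinarith
      · simp only [ht, if_neg h]
        have h' : c < 0 := lt_of_not_ge h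
        have := (hu x₀).1
        nlinarith
    have hu' : InRegion a b (Function.update u x₀ t) := by
      intro x
      by_cases h : x = x₀
      · subst h; simpa using htmem
      · rw [Function.update_of_ne h]; exact hu x
    obtain ⟨v, hvreg, hvD, hvout, hlev⟩ := ih _ hu'
    refine ⟨v, hvreg, ?_, ?_, le_trans hle hlev⟩
    · intro x hx
      rcases Finset.mem_insert.mp hx with h | h
      · subst h
        rw [hvout x hx₀, Function.update_self]
        by_cases h : 0 ≤ c
        · right; simp [ht, h]
        · left; simp [ht, h]
      · exact hvD x h
    · intro x hx
      have hxD : x ∉ D := fun h => hx (Finset.mem_insert_of_mem h)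
      have hxne : x ≠ x₀ := fun h => hx (h ▸ Finset.mem_insert_self x₀ D)
      rw [hvout x hxD, Function.update_of_ne hxne]

lemma exists_vertex_le' [Fintype V] {a b : V → ℝ} (hab : ∀ x, a x ≤ b x)
    {f : (V → ℝ) → ℝ} (hf : MultiAffine f) {u : V → ℝ} (hu : InRegion a b u) :
    ∃ v, IsVertex a b v ∧ f v ≤ f u := by
  obtain ⟨v, hv, h⟩ := exists_vertex_ge' hab (multiAffine_neg' hf) hu
  exact ⟨v, hv, by linarith⟩

lemma exists_fixed' {S : Type*} [Fintype S] (Φ : (S → ℝ) → S → ℝ)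
    (hmono : ∀ x y : S → ℝ, (∀ s, x s ≤ y s) → ∀ s, Φ x s ≤ Φ y s)
    (q : S → ℝ) (hq0 : ∀ s, 0 ≤ q s) (h0 : ∀ s, 0 ≤ Φ (fun _ => 0) s)
    (hq : ∀ s, Φ q s ≤ q s) :
    ∃ z : S → ℝ, (∀ s, 0 ≤ z s) ∧ (∀ s, z s ≤ q s) ∧ ∀ s, Φ z s = z s := by
  classical
  set A : Set (S → ℝ) := {x | (∀ s, 0 ≤ x s) ∧ (∀ s, x s ≤ q s) ∧ ∀ s, Φ x s ≤ x s} with hA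
  have hqA : q ∈ A := ⟨hq0, fun s => le_refl _, hq⟩
  set z : S → ℝ := fun s => sInf ((fun x => x s) '' A) with hz
  have hne : ∀ s, ((fun x => x s) '' A).Nonempty := fun s => ⟨q s, q, hqA, rfl⟩
  have hbdd : ∀ s, ∀ y ∈ (fun x => x s) '' A, (0:ℝ) ≤ y := by
    rintro s y ⟨x, hx, rfl⟩; exact hx.1 s
  have hbdd' : ∀ s, BddBelow ((fun x => x s) '' A) := fun s => ⟨0, fun y hy => hbdd s y hy⟩
  have hzle : ∀ x ∈ A, ∀ s, z s ≤ x s := fun x hx s => csInf_le (hbdd' s) ⟨x, hx, rfl⟩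
  have hz0 : ∀ s, 0 ≤ z s := fun s => le_csInf (hne s) (hbdd s)
  have hzq : ∀ s, z s ≤ q s := hzle q hqA
  have hΦz : ∀ s, Φ z s ≤ z s := by
    intro s
    apply le_csInf (hne s)
    rintro y ⟨x, hx, rfl⟩
    exact le_trans (hmono z x (hzle x hx) s) (hx.2.2 s)
  have hΦzA : Φ z ∈ A :=
    ⟨fun s => le_trans (h0 s) (hmono _ _ (fun s => hz0 s) s),
      fun s => le_trans (hmono _ _ hzq s) (hq s),
      fun s => hmono _ _ hΦz s⟩
  exact ⟨z, hz0, hzq, fun s => le_antisymm (hΦz s) (hzle _ hΦzA s)⟩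

end Aux

/-- If the maximal reachability value of the substitution MDP is below the
threshold `lam`, the region is safe; if the minimal value is above `lam`, the region is
unsafe. -/
theorem substitution_mdp_safe_unsafe
    {V S : Type*} [Fintype V] [Nonempty V] [DecidableEq V] [Fintype S] [Nonempty S]
    (P : (V → ℝ) → S → S → ℝ)
    (hma : ∀ s s', MultiAffine fun u => P u s s')
    (a b : V → ℝ) (hab : ∀ x, a x ≤ b x)
    (hwd : PMCWellDef P a b)
    (T : Set S) (s₀ : S) (lam : ℝ)
    (vmax : S → ℝ)
    (hvmax : MaxSol (VertexRows P a b) T vmax ∧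
      ∀ v', MaxSol (VertexRows P a b) T v' → ∀ s, vmax s ≤ v' s)
    (vmin : S → ℝ)
    (hvmin : MinSol (VertexRows P a b) T vmin ∧
      ∀ v', MinSol (VertexRows P a b) T v' → ∀ s, vmin s ≤ v' s)
    (p : (V → ℝ) → S → ℝ)
    (hp : ∀ u, InRegion a b u → IsReachVec (P u) T (p u)) :
    (vmax s₀ ≤ lam → ∀ u, InRegion a b u → p u s₀ ≤ lam) ∧
      (vmin s₀ > lam → ∀ u, InRegion a b u → p u s₀ > lam) := by
  classical
  -- weighted sums are multi-affine
  have hmaw : ∀ (s : S) (w : S → ℝ), MultiAffine (fun u => ∑ s', P u s s' * w s') := by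
    intro s w
    apply multiAffine_sum'
    intro s' x u
    obtain ⟨c, d, h⟩ := hma s s' x u
    refine ⟨c * w s', d * w s', fun t => ?_⟩
    have ht : P (Function.update u x t) s s' = c * t + d := h t
    show P (Function.update u x t) s s' * w s' = c * w s' * t + d * w s'
    rw [ht]; ring
  -- vertex parametrization
  set vtx : (V → Bool) → V → ℝ := fun f x => if f x then b x else a x with hvtxdef
  have hvtx_vertex : ∀ f, IsVertex a b (vtx f) := by
    intro f x
    by_cases h : f x = true
    · right; simp [hvtxdef, h]
    · left; simp [hvtxdef, h]
  have hvtx_reg : ∀ f, InRegion a b (vtx f) := by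
    intro f x
    by_cases h : f x = true <;> simp [hvtxdef, h, hab x]
  have hvertex_eq : ∀ v, IsVertex a b v → ∃ f, vtx f = v := by
    intro v hv
    refine ⟨fun x => if v x = b x then true else false, funext fun x => ?_⟩
    by_cases h : v x = b x
    · simp [hvtxdef, h]
    · rcases hv x with h' | h'
      · simp only [hvtxdef, if_neg h]
        simp [h']
      · exact absurd h' h
  have hrows : ∀ s, VertexRows P a b s
      = Set.range (fun f : V → Bool => fun s' => P (vtx f) s s') := by
    intro s
    ext row
    constructor
    · rintro ⟨v, hv, rfl⟩
      obtain ⟨f, hf⟩ := hvertex_eq v hv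
      exact ⟨f, by funext s'; show P (vtx f) s s' = P v s s'; rw [hf]⟩
    · rintro ⟨f, rfl⟩
      exact ⟨vtx f, hvtx_vertex f, rfl⟩
  set F : S → (S → ℝ) → (V → Bool) → ℝ :=
    fun s x f => ∑ s', P (vtx f) s s' * x s' with hFdef
  have himg : ∀ (s : S) (x : S → ℝ),
      (fun row => ∑ s', row s' * x s') '' VertexRows P a b s = Set.range (F s x) := by
    intro s x
    rw [hrows, ← Set.range_comp]
    rfl
  have hmin : ∀ (s : S) (x : S → ℝ),
      IsLeast (Set.range (F s x)) (sInf (Set.range (F s x))) := by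
    intro s x
    obtain ⟨f0, hf0⟩ := Finite.exists_min (F s x)
    have hL : IsLeast (Set.range (F s x)) (F s x f0) :=
      ⟨⟨f0, rfl⟩, by rintro y ⟨f, rfl⟩; exact hf0 f⟩
    rwa [hL.csInf_eq]
  constructor
  · -- safe direction
    intro hlam u hu
    have hPu := hwd.1 u hu
    set Φ : (S → ℝ) → S → ℝ :=
      fun x s => if s ∈ T then 1 else ∑ s', P u s s' * x s' with hΦdef
    have hmono : ∀ x y : S → ℝ, (∀ s, x s ≤ y s) → ∀ s, Φ x s ≤ Φ y s := by
      intro x y hxy s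
      by_cases hs : s ∈ T
      · simp [hΦdef, hs]
      · simp only [hΦdef, if_neg hs]
        exact Finset.sum_le_sum fun s' _ =>
          mul_le_mul_of_nonneg_left (hxy s') (hPu.1 s s')
    have h0 : ∀ s, 0 ≤ Φ (fun _ => 0) s := by
      intro s
      by_cases hs : s ∈ T <;> simp [hΦdef, hs]
    have hsup : ∀ s, Φ vmax s ≤ vmax s := by
      intro s
      by_cases hs : s ∈ T
      · simp [hΦdef, hs, hvmax.1.2.1 s hs]
      · simp only [hΦdef, if_neg hs]
        obtain ⟨v, hv, hle⟩ := exists_vertex_ge' hab (hmaw s vmax) hu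
        refine le_trans hle ((hvmax.1.2.2 s hs).2 ?_)
        exact ⟨fun s' => P v s s', ⟨v, hv, rfl⟩, rfl⟩
    obtain ⟨z, hz0, hzq, hfix⟩ := exists_fixed' Φ hmono vmax hvmax.1.1 h0 hsup
    have hzsol : ReachSol (P u) T z := by
      refine ⟨hz0, fun s hs => ?_, fun s hs => ?_⟩
      · rw [← hfix s]; simp [hΦdef, hs]
      · rw [← hfix s]; simp [hΦdef, hs]
    calc p u s₀ ≤ z s₀ := (hp u hu).2 z hzsol s₀
      _ ≤ vmax s₀ := hzq s₀
      _ ≤ lam := hlam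
  · -- unsafe direction
    intro hlam u hu
    have hpu := hp u hu
    set Ψ : (S → ℝ) → S → ℝ :=
      fun x s => if s ∈ T then 1 else sInf (Set.range (F s x)) with hΨdef
    have hFmono : ∀ (s : S) (x y : S → ℝ), (∀ s', x s' ≤ y s') → ∀ f, F s x f ≤ F s y f := by
      intro s x y hxy f
      exact Finset.sum_le_sum fun s' _ =>
        mul_le_mul_of_nonneg_left (hxy s') ((hwd.1 (vtx f) (hvtx_reg f)).1 s s')
    have hmono : ∀ x y : S → ℝ, (∀ s, x s ≤ y s) → ∀ s, Ψ x s ≤ Ψ y s := by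
      intro x y hxy s
      by_cases hs : s ∈ T
      · simp [hΨdef, hs]
      · simp only [hΨdef, if_neg hs]
        obtain ⟨f0, hf0⟩ := (hmin s y).1
        calc sInf (Set.range (F s x)) ≤ F s x f0 := (hmin s x).2 ⟨f0, rfl⟩
          _ ≤ F s y f0 := hFmono s x y hxy f0
          _ = sInf (Set.range (F s y)) := hf0
    have h0 : ∀ s, 0 ≤ Ψ (fun _ => 0) s := by
      intro s
      by_cases hs : s ∈ T
      · simp [hΨdef, hs]
      · simp only [hΨdef, if_neg hs]
        obtain ⟨f0, hf0⟩ := (hmin s (fun _ => 0)).1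
        rw [← hf0]
        simp [hFdef]
    have hsup : ∀ s, Ψ (p u) s ≤ p u s := by
      intro s
      by_cases hs : s ∈ T
      · simp [hΨdef, hs, hpu.1.2.1 s hs]
      · simp only [hΨdef, if_neg hs]
        obtain ⟨v, hv, hle⟩ := exists_vertex_le' hab (hmaw s (p u)) hu
        obtain ⟨f, hf⟩ := hvertex_eq v hv
        have h1 : F s (p u) f = ∑ s', P v s s' * p u s' := by rw [hFdef]; simp [hf]
        calc sInf (Set.range (F s (p u))) ≤ F s (p u) f := (hmin s (p u)).2 ⟨f, rfl⟩
          _ ≤ ∑ s', P u s s' * p u s' := by rw [h1]; exact hle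
          _ = p u s := (hpu.1.2.2 s hs).symm
    obtain ⟨z, hz0, hzq, hfix⟩ := exists_fixed' Ψ hmono (p u) hpu.1.1 h0 hsup
    have hzsol : MinSol (VertexRows P a b) T z := by
      refine ⟨hz0, fun s hs => ?_, fun s hs => ?_⟩
      · rw [← hfix s]; simp [hΨdef, hs]
      · rw [himg s z]
        have : z s = sInf (Set.range (F s z)) := by
          rw [← hfix s]; simp [hΨdef, hs]
        rw [this]
        exact hmin s z
    have h1 : vmin s₀ ≤ z s₀ := hvmin.2 z hzsol s₀
    have h2 : z s₀ ≤ p u s₀ := hzq s₀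
    linarith
end

section
/- Let P be a pMDP over states S and actions A, with region r (bounds a, b) well-defined for P, T ⊆ S a target set, s₀ ∈ S and λ ∈ ℝ. For u ∈ r let Vmax(u) be the maximal reachability value vector of the MDP whose rows at each s ∉ T are { (s' ↦ P u s α s') | α ∈ Act(s) }, assumed to exist. Let w be the pointwise-least nonnegative function on S ⊕ (S × A) satisfying: w (Sum.inl s) = 1 for s ∈ T; w (Sum.inl s) = max_{α ∈ Act(s)} w (Sum.inr (s, α)) for s ∉ T; w (Sum.inr (s, α)) = max over vertices v of r of ∑_{s'} P v s α s' · w (Sum.inl s') for α ∈ Act(s); and w (Sum.inr (s, α)) = 0 for α ∉ Act(s); assumed to exist. If w (Sum.inl s₀) ≤ λ, then Vmax(u) s₀ ≤ λ for every u ∈ r. -/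
open Finset

/-- The region with bounds `a`, `b` is well-defined for the pMDP `(Act, P)`. -/
def PMDPWellDef {V S A : Type*} [Fintype S] (Act : S → Set A)
    (P : (V → ℝ) → S → A → S → ℝ) (a b : V → ℝ) : Prop :=
  (∀ u, InRegion a b u → ∀ s, ∀ α ∈ Act s,
      (∀ s', 0 ≤ P u s α s') ∧ ∑ s', P u s α s' = 1) ∧
    ∀ s, ∀ α ∈ Act s, ∀ s',
      (∀ u, InRegion a b u → P u s α s' = 0) ∨ ∀ u, InRegion a b u → 0 < P u s α s'

/-- The rows of the MDP obtained by instantiating the pMDP at valuation `u`. -/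
def ActRows {V S A : Type*} (Act : S → Set A) (P : (V → ℝ) → S → A → S → ℝ)
    (u : V → ℝ) (s : S) : Set (S → ℝ) :=
  {row | ∃ α ∈ Act s, row = fun s' => P u s α s'}

/-- `v` is the maximal reachability value vector: the pointwise-least such solution. -/
def IsMaxVec {S : Type*} [Fintype S] (Rows : S → Set (S → ℝ)) (T : Set S) (v : S → ℝ) :
    Prop :=
  MaxSol Rows T v ∧ ∀ v', MaxSol Rows T v' → ∀ s, v s ≤ v' s

/-- A solution of the equation system of the substitution stochastic game in which both
the player choosing enabled actions and the player choosing vertex valuations maximize. -/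
def GameSolMaxMax {V S A : Type*} [Fintype S] (Act : S → Set A) (T : Set S)
    (a b : V → ℝ) (P : (V → ℝ) → S → A → S → ℝ) (w : S ⊕ (S × A) → ℝ) : Prop :=
  (∀ t, 0 ≤ w t) ∧
    (∀ s ∈ T, w (Sum.inl s) = 1) ∧
    (∀ s ∉ T, IsGreatest ((fun α => w (Sum.inr (s, α))) '' Act s) (w (Sum.inl s))) ∧
    (∀ s, ∀ α ∈ Act s,
      IsGreatest ((fun v => ∑ s', P v s α s' * w (Sum.inl s')) '' {v | IsVertex a b v})
        (w (Sum.inr (s, α)))) ∧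
    ∀ s α, α ∉ Act s → w (Sum.inr (s, α)) = 0


/-!
Fix a valuation `u` in the region. A multi-affine function on a box attains its maximum at a
vertex, so for every state `s ∉ T` and enabled action `α` the row of `P u` at `(s, α)` gives
`w ∘ inl` an expected value of at most `w (inr (s, α)) ≤ w (inl s)`: the game value is a
supersolution of the Bellman equation of the MDP at `u`. The Bellman operator is monotone and
maps the box `[0, w ∘ inl]` into itself, so by Knaster–Tarski it has a fixed point there; that
fixed point solves the maximal-reachability equations, hence lies above `Vmax u`.
-/

open Function

section Vertex

variable {V : Type*} [DecidableEq V]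

theorem multiAffine_sum_mul {S : Type*} [Fintype S] (f : S → (V → ℝ) → ℝ)
    (hf : ∀ s, MultiAffine (f s)) (k : S → ℝ) : MultiAffine fun u => ∑ s, f s u * k s := by
  intro x u
  choose c d hcd using fun s => hf s x u
  refine ⟨∑ s, c s * k s, ∑ s, d s * k s, fun t => ?_⟩
  simp only [hcd, add_mul, sum_add_distrib, sum_mul]
  exact congrArg (· + _) (sum_congr rfl fun s _ => by ring)

theorem MultiAffine.exists_endpoint_le {f : (V → ℝ) → ℝ} (hf : MultiAffine f) (x : V)
    (u : V → ℝ) {lo hi : ℝ} (hlo : lo ≤ u x) (hhi : u x ≤ hi) :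
    ∃ t, (t = lo ∨ t = hi) ∧ f u ≤ f (update u x t) := by
  obtain ⟨c, d, hcd⟩ := hf x u
  have hu : f u = c * u x + d := by rw [← hcd, update_eq_self]
  rcases le_total 0 c with hc | hc
  · exact ⟨hi, Or.inr rfl, by rw [hu, hcd]; nlinarith⟩
  · exact ⟨lo, Or.inl rfl, by rw [hu, hcd]; nlinarith⟩

theorem MultiAffine.exists_isVertex_le_s12 [Fintype V] {f : (V → ℝ) → ℝ} (hf : MultiAffine f)
    {a b u : V → ℝ} (hab : ∀ x, a x ≤ b x) (hu : InRegion a b u) :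
    ∃ v, IsVertex a b v ∧ f u ≤ f v := by
  -- Induction on the set of coordinates that may still lie strictly inside their interval.
  suffices key : ∀ F : Finset V, ∀ u, InRegion a b u →
      (∀ x ∉ F, u x = a x ∨ u x = b x) → ∃ v, IsVertex a b v ∧ f u ≤ f v from
    key univ u hu fun x hx => absurd (mem_univ x) hx
  intro F
  induction F using Finset.induction_on with
  | empty => exact fun u _ hvert => ⟨u, fun x => hvert x (notMem_empty x), le_rfl⟩
  | insert x F _ ih =>
    intro u hu hvert
    obtain ⟨t, ht, hle⟩ := hf.exists_endpoint_le x u (hu x).1 (hu x).2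
    have hut : InRegion a b (update u x t) := by
      intro y
      rcases eq_or_ne y x with rfl | hne
      · rcases ht with rfl | rfl <;> simp [hab y]
      · simpa [hne] using hu y
    obtain ⟨v, hv, hle'⟩ := ih (update u x t) hut fun y hy => by
      rcases eq_or_ne y x with rfl | hne
      · simpa using ht
      · simpa [hne] using hvert y (by simp [hy, hne])
    exact ⟨v, hv, hle.trans hle'⟩

end Vertex

section Bellman

variable {S : Type*} [Fintype S]

open scoped Classical in
noncomputable def bellman (Rows : S → Set (S → ℝ)) (T : Set S) (v : S → ℝ) (s : S) : ℝ :=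
  if s ∈ T then 1 else sSup ((fun row => ∑ s', row s' * v s') '' Rows s)

variable {Rows : S → Set (S → ℝ)} {T : Set S}

theorem isGreatest_bellman {s : S} (hfin : (Rows s).Finite) (hne : (Rows s).Nonempty)
    (hs : s ∉ T) (v : S → ℝ) :
    IsGreatest ((fun row => ∑ s', row s' * v s') '' Rows s) (bellman Rows T v s) := by
  rw [bellman, if_neg hs]
  exact ⟨(hne.image _).csSup_mem (hfin.image _), fun _ h => le_csSup (hfin.image _).bddAbove h⟩

theorem bellman_mono (hfin : ∀ s, (Rows s).Finite) (hne : ∀ s, (Rows s).Nonempty)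
    (hnn : ∀ s, ∀ row ∈ Rows s, 0 ≤ row) : Monotone (bellman Rows T) := by
  intro v v' hvv' s
  by_cases hs : s ∈ T
  · simp [bellman, hs]
  obtain ⟨⟨row, hrow, hval⟩, -⟩ := isGreatest_bellman (hfin s) (hne s) hs v
  rw [← hval]
  refine le_trans ?_ ((isGreatest_bellman (hfin s) (hne s) hs v').2 ⟨row, hrow, rfl⟩)
  exact sum_le_sum fun s' _ => mul_le_mul_of_nonneg_left (hvv' s') (hnn s row hrow s')

theorem bellman_nonneg (hfin : ∀ s, (Rows s).Finite) (hne : ∀ s, (Rows s).Nonempty)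
    (hnn : ∀ s, ∀ row ∈ Rows s, 0 ≤ row) {v : S → ℝ} (hv : 0 ≤ v) : 0 ≤ bellman Rows T v := by
  intro s
  by_cases hs : s ∈ T
  · simp [bellman, hs]
  obtain ⟨⟨row, hrow, hval⟩, -⟩ := isGreatest_bellman (hfin s) (hne s) hs v
  rw [Pi.zero_apply, ← hval]
  exact sum_nonneg fun s' _ => mul_nonneg (hnn s row hrow s') (hv s')

theorem bellman_le (hfin : ∀ s, (Rows s).Finite) (hne : ∀ s, (Rows s).Nonempty)
    {w : S → ℝ} (hT : ∀ s ∈ T, 1 ≤ w s)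
    (hrows : ∀ s ∉ T, ∀ row ∈ Rows s, ∑ s', row s' * w s' ≤ w s) : bellman Rows T w ≤ w := by
  intro s
  by_cases hs : s ∈ T
  · simpa [bellman, hs] using hT s hs
  obtain ⟨⟨row, hrow, hval⟩, -⟩ := isGreatest_bellman (hfin s) (hne s) hs w
  exact hval ▸ hrows s hs row hrow

theorem maxSol_of_bellman_eq (hfin : ∀ s, (Rows s).Finite) (hne : ∀ s, (Rows s).Nonempty)
    {v : S → ℝ} (hv : 0 ≤ v) (hfix : bellman Rows T v = v) : MaxSol Rows T v := by
  refine ⟨hv, fun s hs => by rw [← hfix]; simp [bellman, hs], fun s hs => ?_⟩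
  have h := isGreatest_bellman (hfin s) (hne s) hs v
  rwa [hfix] at h

theorem IsMaxVec.le_of_supersolution {vmax w : S → ℝ} (hmax : IsMaxVec Rows T vmax)
    (hfin : ∀ s, (Rows s).Finite) (hne : ∀ s, (Rows s).Nonempty)
    (hnn : ∀ s, ∀ row ∈ Rows s, 0 ≤ row) (hw : 0 ≤ w) (hT : ∀ s ∈ T, 1 ≤ w s)
    (hrows : ∀ s ∉ T, ∀ row ∈ Rows s, ∑ s', row s' * w s' ≤ w s) : vmax ≤ w := by
  have : Fact (0 ≤ w) := ⟨hw⟩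
  have hmono := bellman_mono (T := T) hfin hne hnn
  let F : Set.Icc 0 w →o Set.Icc 0 w :=
    ⟨fun v => ⟨bellman Rows T v, bellman_nonneg hfin hne hnn v.2.1,
      (hmono v.2.2).trans (bellman_le hfin hne hT hrows)⟩, fun _ _ h => hmono h⟩
  have hfix : bellman Rows T F.lfp = F.lfp := congrArg Subtype.val F.map_lfp
  exact fun s => (hmax.2 _ (maxSol_of_bellman_eq hfin hne F.lfp.2.1 hfix) s).trans (F.lfp.2.2 s)

end Bellman

section PMDP

variable {V S A : Type*} {Act : S → Set A} {P : (V → ℝ) → S → A → S → ℝ}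

theorem finite_actRows [Finite A] (u : V → ℝ) (s : S) : (ActRows Act P u s).Finite :=
  ((Set.toFinite (Act s)).image fun α s' => P u s α s').subset
    fun _ ⟨α, hα, hrow⟩ => ⟨α, hα, hrow.symm⟩

theorem actRows_nonempty (hAct : ∀ s, (Act s).Nonempty) (u : V → ℝ) (s : S) :
    (ActRows Act P u s).Nonempty :=
  let ⟨α, hα⟩ := hAct s
  ⟨_, α, hα, rfl⟩

theorem nonneg_of_mem_actRows [Fintype S] {a b u : V → ℝ} (hwd : PMDPWellDef Act P a b)
    (hu : InRegion a b u) (s : S) : ∀ row ∈ ActRows Act P u s, 0 ≤ row := by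
  rintro _ ⟨α, hα, rfl⟩
  exact (hwd.1 u hu s α hα).1

theorem GameSolMaxMax.sum_le [Fintype V] [DecidableEq V] [Fintype S] {T : Set S}
    {a b u : V → ℝ} {w : S ⊕ (S × A) → ℝ} (hw : GameSolMaxMax Act T a b P w)
    (hab : ∀ x, a x ≤ b x) (hu : InRegion a b u) {s : S} (hs : s ∉ T) {α : A} (hα : α ∈ Act s)
    (hma : ∀ s', MultiAffine fun u => P u s α s') :
    ∑ s', P u s α s' * w (Sum.inl s') ≤ w (Sum.inl s) := by
  obtain ⟨v, hv, hle⟩ := (multiAffine_sum_mul _ hma _).exists_isVertex_le_s12 hab hu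
  calc ∑ s', P u s α s' * w (Sum.inl s') ≤ ∑ s', P v s α s' * w (Sum.inl s') := hle
    _ ≤ w (Sum.inr (s, α)) := (hw.2.2.2.1 s α hα).2 ⟨v, hv, rfl⟩
    _ ≤ w (Sum.inl s) := (hw.2.2.1 s hs).2 ⟨α, hα, rfl⟩

end PMDP

theorem substitution_game_upper_bound_general
    {V S A : Type*} [Fintype V] [DecidableEq V]
    [Fintype S] [Fintype A]
    (Act : S → Set A) (hAct : ∀ s, (Act s).Nonempty)
    (P : (V → ℝ) → S → A → S → ℝ)
    (hma : ∀ s α s', MultiAffine fun u => P u s α s')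
    (a b : V → ℝ) (hab : ∀ x, a x ≤ b x)
    (hwd : PMDPWellDef Act P a b)
    (T : Set S) (s₀ : S) (lam : ℝ)
    (Vmax : (V → ℝ) → S → ℝ)
    (hVmax : ∀ u, InRegion a b u → IsMaxVec (ActRows Act P u) T (Vmax u))
    (w : S ⊕ (S × A) → ℝ)
    (hw : GameSolMaxMax Act T a b P w ∧
      ∀ w', GameSolMaxMax Act T a b P w' → ∀ t, w t ≤ w' t)
    (hbound : w (Sum.inl s₀) ≤ lam) :
    ∀ u, InRegion a b u → Vmax u s₀ ≤ lam := by
  intro u hu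
  have hsuper : Vmax u ≤ fun s => w (Sum.inl s) :=
    (hVmax u hu).le_of_supersolution (finite_actRows u) (actRows_nonempty hAct u)
      (nonneg_of_mem_actRows hwd hu) (fun s => hw.1.1 _) (fun s hs => (hw.1.2.1 s hs).ge)
      (by rintro s hs _ ⟨α, hα, rfl⟩; exact hw.1.sum_le hab hu hs hα (hma s α))
  exact (hsuper s₀).trans hbound

/-- If the value of the substitution game (both players maximizing) at `s₀`
is at most `lam`, then the maximal reachability value of every instantiated MDP over the
region is at most `lam` at `s₀`. -/
theorem substitution_game_upper_bound
    {V S A : Type*} [Fintype V] [Nonempty V] [DecidableEq V]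
    [Fintype S] [Nonempty S] [Fintype A]
    (Act : S → Set A) (hAct : ∀ s, (Act s).Nonempty)
    (P : (V → ℝ) → S → A → S → ℝ)
    (hma : ∀ s α s', MultiAffine fun u => P u s α s')
    (a b : V → ℝ) (hab : ∀ x, a x ≤ b x)
    (hwd : PMDPWellDef Act P a b)
    (T : Set S) (s₀ : S) (lam : ℝ)
    (Vmax : (V → ℝ) → S → ℝ)
    (hVmax : ∀ u, InRegion a b u → IsMaxVec (ActRows Act P u) T (Vmax u))
    (w : S ⊕ (S × A) → ℝ)
    (hw : GameSolMaxMax Act T a b P w ∧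
      ∀ w', GameSolMaxMax Act T a b P w' → ∀ t, w t ≤ w' t)
    (hbound : w (Sum.inl s₀) ≤ lam) :
    ∀ u, InRegion a b u → Vmax u s₀ ≤ lam :=
  substitution_game_upper_bound_general Act hAct P hma a b hab hwd T s₀ lam Vmax hVmax w hw hbound
end
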